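/- arXiv:2307.13332 — 4 statements merged into one kernel-verified Lean document; each statement's English description precedes it below -/
import Mathlib

section
/- Let Φ ∈ ℝ^{S×d}, D diagonal nonnegative, P row-stochastic, γ ∈ [0,1), r ∈ ℝ^S, and let v = (I − γP)^{-1} r. Define A = ΦᵀD(I − γP)Φ, b = ΦᵀDr, Σ = ΦᵀDΦ, and assume A and Σ are invertible. Let θ_LS = Σ^{-1}ΦᵀD v (the weighted least-squares parameter) and θ_LSTD = A^{-1}b. Setting v⊥ = v − Φθ_LS, one has θ_LS − θ_LSTD = γ A^{-1} Φᵀ D P v⊥. -/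
/-!
With `M = 1 - γP`, `K = ΦᵀD` and `A = KMΦ`, the TD solution satisfies `Aθ_LSTD = Kr = KMv`, so
`A(θ_LS - θ_LSTD) = -KM v⊥`. The normal equations of the weighted least-squares fit say `K v⊥ = 0`,
which leaves `-KM v⊥ = γ KP v⊥`.
-/

open Matrix

namespace Matrix

variable {R : Type*} [CommRing R] {m n : Type*} [Fintype m]

theorem mul_one_sub_smul_mulVec_of_mulVec_eq_zero {K : Matrix n m R} {w : m → R}
    (hKw : K *ᵥ w = 0) (γ : R) (P : Matrix m m R) [DecidableEq m] :
    (K * (1 - γ • P)) *ᵥ w = -(γ • ((K * P) *ᵥ w)) := by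
  rw [Matrix.mul_sub, Matrix.mul_one, Matrix.mul_smul, sub_mulVec, smul_mulVec, hKw, zero_sub]

variable [Fintype n] [DecidableEq n]

theorem mulVec_nonsing_inv_mulVec {A : Matrix n n R} (hA : IsUnit A) (x : n → R) :
    A *ᵥ (A⁻¹ *ᵥ x) = x := by
  rw [mulVec_mulVec, mul_nonsing_inv _ ((isUnit_iff_isUnit_det A).mp hA), one_mulVec]

theorem nonsing_inv_mulVec_mulVec {A : Matrix n n R} (hA : IsUnit A) (x : n → R) :
    A⁻¹ *ᵥ (A *ᵥ x) = x := by
  rw [mulVec_mulVec, nonsing_inv_mul _ ((isUnit_iff_isUnit_det A).mp hA), one_mulVec]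

theorem mulVec_sub_mulVec_leastSquares {K : Matrix n m R} {Φ : Matrix m n R}
    (hKΦ : IsUnit (K * Φ)) (v : m → R) :
    K *ᵥ (v - Φ *ᵥ ((K * Φ)⁻¹ *ᵥ (K *ᵥ v))) = 0 := by
  rw [mulVec_sub, mulVec_mulVec, mulVec_nonsing_inv_mulVec hKΦ, sub_self]

theorem sub_nonsing_inv_mulVec_mul_mulVec {K : Matrix n m R} {M : Matrix m m R}
    {Φ : Matrix m n R} (hA : IsUnit (K * M * Φ)) (θ : n → R) (v : m → R) :
    θ - (K * M * Φ)⁻¹ *ᵥ (K *ᵥ (M *ᵥ v)) = -((K * M * Φ)⁻¹ *ᵥ ((K * M) *ᵥ (v - Φ *ᵥ θ))) := by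
  conv_lhs => rw [← nonsing_inv_mulVec_mulVec hA θ]
  rw [← mulVec_sub, ← mulVec_neg]
  congr 1
  rw [mulVec_sub, mulVec_mulVec, mulVec_mulVec, neg_sub]

end Matrix

theorem stmt4_general (S d : ℕ) (Φ : Matrix (Fin S) (Fin d) ℝ)
    (μ : Fin S → ℝ)
    (P : Matrix (Fin S) (Fin S) ℝ)
    (γ : ℝ)
    (r : Fin S → ℝ)
    (hI : IsUnit (1 - γ • P))
    (hA : IsUnit (Φᵀ * Matrix.diagonal μ * (1 - γ • P) * Φ))
    (hSig : IsUnit (Φᵀ * Matrix.diagonal μ * Φ)) :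
    let D := Matrix.diagonal μ
    let A := Φᵀ * D * (1 - γ • P) * Φ
    let v := (1 - γ • P)⁻¹ *ᵥ r
    let θLS := (Φᵀ * D * Φ)⁻¹ *ᵥ ((Φᵀ * D) *ᵥ v)
    let θLSTD := A⁻¹ *ᵥ ((Φᵀ * D) *ᵥ r)
    let vperp := v - Φ *ᵥ θLS
    θLS - θLSTD = γ • (A⁻¹ *ᵥ ((Φᵀ * D * P) *ᵥ vperp)) := by
  intro D A v θLS θLSTD vperp
  have hr : r = (1 - γ • P) *ᵥ v := (mulVec_nonsing_inv_mulVec hI r).symm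
  have hperp : (Φᵀ * D) *ᵥ vperp = 0 := mulVec_sub_mulVec_leastSquares hSig v
  calc θLS - θLSTD = -(A⁻¹ *ᵥ ((Φᵀ * D * (1 - γ • P)) *ᵥ vperp)) := by
        rw [show θLSTD = A⁻¹ *ᵥ ((Φᵀ * D) *ᵥ ((1 - γ • P) *ᵥ v)) by rw [← hr]]
        exact sub_nonsing_inv_mulVec_mul_mulVec hA θLS v
    _ = γ • (A⁻¹ *ᵥ ((Φᵀ * D * P) *ᵥ vperp)) := by
        rw [mul_one_sub_smul_mulVec_of_mulVec_eq_zero hperp, mulVec_neg, neg_neg, mulVec_smul]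

theorem stmt4 (S d : ℕ) (Φ : Matrix (Fin S) (Fin d) ℝ)
    (μ : Fin S → ℝ) (hμ : ∀ s, 0 ≤ μ s)
    (P : Matrix (Fin S) (Fin S) ℝ)
    (hP0 : ∀ i j, 0 ≤ P i j) (hP1 : ∀ i, ∑ j, P i j = 1)
    (γ : ℝ) (hγ0 : 0 ≤ γ) (hγ1 : γ < 1)
    (r : Fin S → ℝ)
    (hI : IsUnit (1 - γ • P))
    (hA : IsUnit (Φᵀ * Matrix.diagonal μ * (1 - γ • P) * Φ))
    (hSig : IsUnit (Φᵀ * Matrix.diagonal μ * Φ)) :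
    let D := Matrix.diagonal μ
    let A := Φᵀ * D * (1 - γ • P) * Φ
    let v := (1 - γ • P)⁻¹ *ᵥ r
    let θLS := (Φᵀ * D * Φ)⁻¹ *ᵥ ((Φᵀ * D) *ᵥ v)
    let θLSTD := A⁻¹ *ᵥ ((Φᵀ * D) *ᵥ r)
    let vperp := v - Φ *ᵥ θLS
    θLS - θLSTD = γ • (A⁻¹ *ᵥ ((Φᵀ * D * P) *ᵥ vperp)) :=
  stmt4_general S d Φ μ P γ r hI hA hSig
end

section
/- Let Φ ∈ ℝ^{S×d} with rows of ℓ₂-norm at most 1, D the diagonal matrix of a probability distribution μ, P row-stochastic, γ ∈ [0,1), r ∈ ℝ^S, v = (I−γP)^{-1} r, A = ΦᵀD(I−γP)Φ invertible, θ_LSTD = A^{-1}ΦᵀDr, and θ_∞ any minimizer of θ ↦ ‖Φθ − v‖_∞. Then ‖Φθ_LSTD − v‖_∞ ≤ (1 + (1+γ)/σ_min(A)) · ‖Φθ_∞ − v‖_∞. -/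
/-!
Put `δ = Φ θinf - v`. Since `(1 - γ P) v = r`, the LSTD residual is `Φ θLSTD - v = δ - Φ u` with
`A u = Φᵀ D (1 - γ P) δ`. Rows of `Φ` of Euclidean norm at most one give `‖Φ u‖_∞ ≤ ‖u‖₂` and
`‖Φᵀ D z‖₂ ≤ ‖z‖_∞`, stochasticity of `P` gives `‖(1 - γ P) δ‖_∞ ≤ (1 + γ) ‖δ‖_∞`, and
`sMin A ‖u‖₂ ≤ ‖A u‖₂`; the triangle inequality concludes.
-/

open Matrix

/-- Euclidean norm of a vector in `ℝ^n`. -/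
noncomputable def euclNorm {n : ℕ} (x : Fin n → ℝ) : ℝ := Real.sqrt (x ⬝ᵥ x)

/-- Minimum singular value of a square matrix: the infimum of `‖M x‖₂` over unit vectors. -/
noncomputable def sMin {n : ℕ} (M : Matrix (Fin n) (Fin n) ℝ) : ℝ :=
  sInf {r : ℝ | ∃ x : Fin n → ℝ, euclNorm x = 1 ∧ r = euclNorm (M *ᵥ x)}

/-- Sup norm of a vector. -/
noncomputable def linf {n : ℕ} (x : Fin n → ℝ) : ℝ := ⨆ i, |x i|

open WithLp

lemma euclNorm_eq_norm {n : ℕ} (x : Fin n → ℝ) : euclNorm x = ‖toLp 2 x‖ := by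
  rw [euclNorm, EuclideanSpace.norm_eq, dotProduct]
  simp [sq]

lemma linf_eq_norm {n : ℕ} (x : Fin n → ℝ) : linf x = ‖x‖ :=
  le_antisymm (Real.iSup_le (fun i => norm_le_pi_norm x i) (norm_nonneg x))
    ((pi_norm_le_iff_of_nonneg (Real.iSup_nonneg fun i => abs_nonneg (x i))).2
      fun i => le_ciSup (f := fun i => |x i|) (Set.finite_range _).bddAbove i)

section FeatureBounds

variable {m n : Type*} [Fintype n]

lemma abs_mulVec_apply_le (Φ : Matrix m n ℝ) (u : n → ℝ) (i : m) :
    |(Φ *ᵥ u) i| ≤ ‖toLp 2 (Φ i)‖ * ‖toLp 2 u‖ := by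
  have h := abs_real_inner_le_norm (toLp 2 (Φ i)) (toLp 2 u)
  rwa [EuclideanSpace.inner_toLp_toLp, star_trivial, dotProduct_comm] at h

lemma norm_mulVec_le_of_norm_row_le_one [Fintype m] {Φ : Matrix m n ℝ}
    (hΦ : ∀ i, ‖toLp 2 (Φ i)‖ ≤ 1) (u : n → ℝ) : ‖Φ *ᵥ u‖ ≤ ‖toLp 2 u‖ :=
  (pi_norm_le_iff_of_nonneg (norm_nonneg _)).2 fun i =>
    (abs_mulVec_apply_le Φ u i).trans (mul_le_of_le_one_left (norm_nonneg _) (hΦ i))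

lemma norm_transpose_mul_diagonal_mulVec_le [Fintype m] [DecidableEq m] {Φ : Matrix m n ℝ}
    (hΦ : ∀ i, ‖toLp 2 (Φ i)‖ ≤ 1) {μ : m → ℝ} (hμ : ∀ s, 0 ≤ μ s) (z : m → ℝ) :
    ‖toLp 2 ((Φᵀ * diagonal μ) *ᵥ z)‖ ≤ (∑ s, μ s) * ‖z‖ := by
  have hsum : (Φᵀ * diagonal μ) *ᵥ z = ∑ s, (μ s * z s) • Φ s := by
    ext j
    simp [mulVec, dotProduct, Finset.sum_apply, mul_comm, mul_left_comm]
  calc ‖toLp 2 ((Φᵀ * diagonal μ) *ᵥ z)‖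
      = ‖∑ s, (μ s * z s) • toLp 2 (Φ s)‖ := by simp [hsum]
    _ ≤ ∑ s, ‖(μ s * z s) • toLp 2 (Φ s)‖ := norm_sum_le _ _
    _ ≤ ∑ s, μ s * ‖z‖ := Finset.sum_le_sum fun s _ => by
      rw [norm_smul, norm_mul, Real.norm_of_nonneg (hμ s)]
      exact mul_le_of_le_one_right (mul_nonneg (hμ s) (norm_nonneg _)) (hΦ s) |>.trans
        (mul_le_mul_of_nonneg_left (norm_le_pi_norm z s) (hμ s))
    _ = (∑ s, μ s) * ‖z‖ := (Finset.sum_mul ..).symm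

end FeatureBounds

lemma norm_mulVec_le_of_mem_rowStochastic {n : Type*} [Fintype n] [DecidableEq n]
    {P : Matrix n n ℝ} (hP : P ∈ rowStochastic ℝ n) (x : n → ℝ) : ‖P *ᵥ x‖ ≤ ‖x‖ := by
  refine (pi_norm_le_iff_of_nonneg (norm_nonneg x)).2 fun i => ?_
  calc ‖(P *ᵥ x) i‖ ≤ ∑ j, ‖P i j * x j‖ := norm_sum_le _ _
    _ ≤ ∑ j, P i j * ‖x‖ := Finset.sum_le_sum fun j _ => by
      rw [norm_mul, Real.norm_of_nonneg (nonneg_of_mem_rowStochastic hP)]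
      exact mul_le_mul_of_nonneg_left (norm_le_pi_norm x j) (nonneg_of_mem_rowStochastic hP)
    _ = ‖x‖ := by rw [← Finset.sum_mul, sum_row_of_mem_rowStochastic hP, one_mul]

lemma norm_one_sub_smul_mulVec_le {n : Type*} [Fintype n] [DecidableEq n]
    {P : Matrix n n ℝ} (hP : P ∈ rowStochastic ℝ n) {γ : ℝ} (hγ : 0 ≤ γ) (x : n → ℝ) :
    ‖(1 - γ • P) *ᵥ x‖ ≤ (1 + γ) * ‖x‖ :=
  calc ‖(1 - γ • P) *ᵥ x‖ = ‖x - γ • (P *ᵥ x)‖ := by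
        rw [sub_mulVec, one_mulVec, smul_mulVec]
    _ ≤ ‖x‖ + γ * ‖P *ᵥ x‖ := by
        grw [norm_sub_le, norm_smul, Real.norm_of_nonneg hγ]
    _ ≤ ‖x‖ + γ * ‖x‖ := by grw [norm_mulVec_le_of_mem_rowStochastic hP]
    _ = (1 + γ) * ‖x‖ := by ring

section MinSingularValue

variable {n : ℕ}

lemma sMin_nonneg (M : Matrix (Fin n) (Fin n) ℝ) : 0 ≤ sMin M :=
  Real.sInf_nonneg (by rintro _ ⟨x, -, rfl⟩; exact Real.sqrt_nonneg _)

lemma sMin_le_of_euclNorm_eq_one (M : Matrix (Fin n) (Fin n) ℝ) {x : Fin n → ℝ}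
    (hx : euclNorm x = 1) : sMin M ≤ euclNorm (M *ᵥ x) :=
  csInf_le ⟨0, by rintro _ ⟨y, -, rfl⟩; exact Real.sqrt_nonneg _⟩ ⟨x, hx, rfl⟩

lemma sMin_mul_le (M : Matrix (Fin n) (Fin n) ℝ) (y : Fin n → ℝ) :
    sMin M * euclNorm y ≤ euclNorm (M *ᵥ y) := by
  rw [euclNorm_eq_norm, euclNorm_eq_norm]
  rcases (norm_nonneg (toLp 2 y)).eq_or_lt with hy | hy
  · rw [← hy, mul_zero]; exact norm_nonneg _
  · have h := sMin_le_of_euclNorm_eq_one M (x := ‖toLp 2 y‖⁻¹ • y) (by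
      rw [euclNorm_eq_norm, toLp_smul, norm_smul, norm_inv, norm_norm, inv_mul_cancel₀ hy.ne'])
    rwa [mulVec_smul, euclNorm_eq_norm, toLp_smul, norm_smul, norm_inv, norm_norm,
      le_inv_mul_iff₀ hy, mul_comm] at h

open scoped Matrix.Norms.L2Operator in
lemma euclNorm_le_norm_inv_mul {M : Matrix (Fin n) (Fin n) ℝ} (hM : IsUnit M) (x : Fin n → ℝ) :
    euclNorm x ≤ ‖M⁻¹‖ * euclNorm (M *ᵥ x) := by
  have h := l2_opNorm_mulVec M⁻¹ (toLp 2 (M *ᵥ x))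
  rwa [ofLp_toLp, mulVec_mulVec, nonsing_inv_mul _ ((isUnit_iff_isUnit_det _).mp hM), one_mulVec,
    ← euclNorm_eq_norm, ← euclNorm_eq_norm] at h

open scoped Matrix.Norms.L2Operator in
lemma sMin_pos [NeZero n] {M : Matrix (Fin n) (Fin n) ℝ} (hM : IsUnit M) : 0 < sMin M := by
  have hinv : 0 < ‖M⁻¹‖ := norm_pos_iff.2 (isUnit_nonsing_inv_iff.2 hM).ne_zero
  have hunit : euclNorm (Pi.single (0 : Fin n) (1 : ℝ)) = 1 := by
    rw [euclNorm_eq_norm, PiLp.toLp_single, PiLp.norm_single, norm_one]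
  refine lt_of_lt_of_le (inv_pos.2 hinv) (le_csInf ⟨_, _, hunit, rfl⟩ ?_)
  rintro _ ⟨x, hx, rfl⟩
  exact (inv_le_iff_one_le_mul₀' hinv).2 (hx ▸ euclNorm_le_norm_inv_mul hM x)

lemma euclNorm_inv_mulVec_le [NeZero n] {M : Matrix (Fin n) (Fin n) ℝ} (hM : IsUnit M)
    (y : Fin n → ℝ) : euclNorm (M⁻¹ *ᵥ y) ≤ euclNorm y / sMin M := by
  rw [le_div_iff₀' (sMin_pos hM)]
  simpa only [mulVec_mulVec, mul_nonsing_inv _ ((isUnit_iff_isUnit_det _).mp hM), one_mulVec]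
    using sMin_mul_le M (M⁻¹ *ᵥ y)

end MinSingularValue

lemma lstd_residual_eq {R m n : Type*} [CommRing R] [Fintype m] [Fintype n] [DecidableEq n]
    (Φ : Matrix m n R) (W : Matrix n m R) (B : Matrix m m R) (hA : IsUnit (W * B * Φ))
    {v r : m → R} (hv : B *ᵥ v = r) (θ : n → R) :
    Φ *ᵥ ((W * B * Φ)⁻¹ *ᵥ (W *ᵥ r)) - v
      = (Φ *ᵥ θ - v) - Φ *ᵥ ((W * B * Φ)⁻¹ *ᵥ (W *ᵥ (B *ᵥ (Φ *ᵥ θ - v)))) := by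
  have hAθ : W *ᵥ (B *ᵥ (Φ *ᵥ θ)) = (W * B * Φ) *ᵥ θ := by
    simp only [mulVec_mulVec, Matrix.mul_assoc]
  have hθ : (W * B * Φ)⁻¹ *ᵥ (W *ᵥ r)
      = θ - (W * B * Φ)⁻¹ *ᵥ (W *ᵥ (B *ᵥ (Φ *ᵥ θ - v))) := by
    rw [mulVec_sub B, mulVec_sub W, hAθ, hv, mulVec_sub, mulVec_mulVec θ (W * B * Φ)⁻¹,
      nonsing_inv_mul _ ((isUnit_iff_isUnit_det _).mp hA), one_mulVec, sub_sub_cancel]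
  rw [hθ, mulVec_sub]
  abel

theorem stmt12_general (S d : ℕ) (Φ : Matrix (Fin S) (Fin d) ℝ)
    (hrows : ∀ i, Real.sqrt (∑ j, (Φ i j) ^ 2) ≤ 1)
    (μ : Fin S → ℝ) (hμ0 : ∀ s, 0 ≤ μ s) (hμ1 : ∑ s, μ s = 1)
    (P : Matrix (Fin S) (Fin S) ℝ)
    (hP0 : ∀ i j, 0 ≤ P i j) (hP1 : ∀ i, ∑ j, P i j = 1)
    (γ : ℝ) (hγ0 : 0 ≤ γ)
    (r : Fin S → ℝ)
    (hI : IsUnit (1 - γ • P))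
    (hA : IsUnit (Φᵀ * Matrix.diagonal μ * (1 - γ • P) * Φ))
    (θinf : Fin d → ℝ) :
    let D := Matrix.diagonal μ
    let A := Φᵀ * D * (1 - γ • P) * Φ
    let v := (1 - γ • P)⁻¹ *ᵥ r
    let θLSTD := A⁻¹ *ᵥ ((Φᵀ * D) *ᵥ r)
    linf (Φ *ᵥ θLSTD - v) ≤ (1 + (1 + γ) / sMin A) * linf (Φ *ᵥ θinf - v) := by
  intro D A v θLSTD
  have hΦ : ∀ i, ‖toLp 2 (Φ i)‖ ≤ 1 := fun i => by simpa [EuclideanSpace.norm_eq] using hrows i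
  have hP : P ∈ rowStochastic ℝ (Fin S) := mem_rowStochastic_iff_sum.2 ⟨hP0, hP1⟩
  have hv : (1 - γ • P) *ᵥ v = r := by
    rw [mulVec_mulVec, mul_nonsing_inv _ ((isUnit_iff_isUnit_det _).mp hI), one_mulVec]
  have hA₀ : 0 ≤ sMin A := sMin_nonneg A
  rw [linf_eq_norm, linf_eq_norm]
  -- for `d = 0` there are no unit vectors, so `sMin A = 0`; but then `θLSTD = θinf`
  rcases Nat.eq_zero_or_pos d with rfl | hd
  · rw [Subsingleton.elim θLSTD θinf]
    exact le_mul_of_one_le_left (norm_nonneg _)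
      (le_add_of_nonneg_right (div_nonneg (by linarith) hA₀))
  have : NeZero d := ⟨hd.ne'⟩
  set δ := Φ *ᵥ θinf - v
  calc ‖Φ *ᵥ θLSTD - v‖ = ‖δ - Φ *ᵥ (A⁻¹ *ᵥ ((Φᵀ * D) *ᵥ ((1 - γ • P) *ᵥ δ)))‖ := by
        rw [lstd_residual_eq Φ (Φᵀ * D) (1 - γ • P) hA hv θinf]
    _ ≤ ‖δ‖ + euclNorm ((Φᵀ * D) *ᵥ ((1 - γ • P) *ᵥ δ)) / sMin A := by
        grw [norm_sub_le, norm_mulVec_le_of_norm_row_le_one hΦ, ← euclNorm_eq_norm,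
          euclNorm_inv_mulVec_le hA]
    _ ≤ ‖δ‖ + (1 + γ) * ‖δ‖ / sMin A := by
        grw [euclNorm_eq_norm, norm_transpose_mul_diagonal_mulVec_le hΦ hμ0, hμ1, one_mul,
          norm_one_sub_smul_mulVec_le hP hγ0]
    _ = (1 + (1 + γ) / sMin A) * ‖δ‖ := by ring

theorem stmt12 (S d : ℕ) (Φ : Matrix (Fin S) (Fin d) ℝ)
    (hrows : ∀ i, Real.sqrt (∑ j, (Φ i j) ^ 2) ≤ 1)
    (μ : Fin S → ℝ) (hμ0 : ∀ s, 0 ≤ μ s) (hμ1 : ∑ s, μ s = 1)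
    (P : Matrix (Fin S) (Fin S) ℝ)
    (hP0 : ∀ i j, 0 ≤ P i j) (hP1 : ∀ i, ∑ j, P i j = 1)
    (γ : ℝ) (hγ0 : 0 ≤ γ) (hγ1 : γ < 1)
    (r : Fin S → ℝ)
    (hI : IsUnit (1 - γ • P))
    (hA : IsUnit (Φᵀ * Matrix.diagonal μ * (1 - γ • P) * Φ))
    (θinf : Fin d → ℝ)
    (hmin : ∀ θ : Fin d → ℝ,
      linf (Φ *ᵥ θinf - (1 - γ • P)⁻¹ *ᵥ r) ≤ linf (Φ *ᵥ θ - (1 - γ • P)⁻¹ *ᵥ r)) :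
    let D := Matrix.diagonal μ
    let A := Φᵀ * D * (1 - γ • P) * Φ
    let v := (1 - γ • P)⁻¹ *ᵥ r
    let θLSTD := A⁻¹ *ᵥ ((Φᵀ * D) *ᵥ r)
    linf (Φ *ᵥ θLSTD - v) ≤ (1 + (1 + γ) / sMin A) * linf (Φ *ᵥ θinf - v) :=
  stmt12_general S d Φ hrows μ hμ0 hμ1 P hP0 hP1 γ hγ0 r hI hA θinf
end

section
/- Let D be the diagonal matrix of a distribution μ on S states, Φ ∈ ℝ^{S×d} with Σ = ΦᵀDΦ invertible, P row-stochastic, and Π_μ = ΦΣ^{-1}ΦᵀD. Then the μ-weighted operator norm ‖Π_μ P‖_μ := sup{‖Π_μ P v‖_μ : ‖v‖_μ = 1} is finite if and only if for every state s' with μ(s') = 0, Σ_s μ(s)·P(s,s')·φ(s) = 0 (the zero vector in ℝ^d). -/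
/-!
Write `Σ = Φᵀ D Φ` and `M = Π_μ P`. A matrix is bounded from the `ν`-seminorm to the `μ`-seminorm
exactly when each `ν`-null column vanishes on the support of `μ`: a unit vector at a null
coordinate has seminorm zero, and conversely Cauchy–Schwarz with weights `ν⁻¹` bounds every row.
Since `Φᵀ D Π_μ = Φᵀ D` and `Π_μ P = Φ Σ⁻¹ (Φᵀ D P)`, a column of `D M` vanishes if and only if
the same column of `Φᵀ D P` does, and the entries of `Φᵀ D P` are the moments in the statement.
-/

open Matrix

noncomputable def weightedNorm {ι : Type*} [Fintype ι] (μ v : ι → ℝ) : ℝ :=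
  √(∑ i, μ i * v i ^ 2)

section WeightedNorm

variable {ι κ : Type*} [Fintype ι] [Fintype κ]

lemma weightedNorm_eq_zero_iff {μ : ι → ℝ} (hμ : ∀ i, 0 ≤ μ i) {v : ι → ℝ} :
    weightedNorm μ v = 0 ↔ ∀ i, μ i * v i = 0 := by
  have hterm : ∀ i, 0 ≤ μ i * v i ^ 2 := fun i => mul_nonneg (hμ i) (sq_nonneg _)
  rw [weightedNorm, Real.sqrt_eq_zero (Finset.sum_nonneg fun i _ => hterm i),
    Finset.sum_eq_zero_iff_of_nonneg fun i _ => hterm i]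
  simp [mul_eq_zero]

lemma sq_dotProduct_le_weighted {ν : κ → ℝ} (hν : ∀ k, 0 ≤ ν k) {r : κ → ℝ}
    (hr : ∀ k, ν k = 0 → r k = 0) (v : κ → ℝ) :
    (r ⬝ᵥ v) ^ 2 ≤ (∑ k, r k ^ 2 / ν k) * ∑ k, ν k * v k ^ 2 := by
  refine Finset.sum_sq_le_sum_mul_sum_of_sq_le_mul _
    (fun k _ => div_nonneg (sq_nonneg _) (hν k)) (fun k _ => mul_nonneg (hν k) (sq_nonneg _))
    fun k _ => ?_
  rcases eq_or_ne (ν k) 0 with h | h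
  · simp [hr k h]
  · exact le_of_eq (by field_simp)

theorem exists_weightedNorm_mulVec_le_iff [DecidableEq κ] {μ : ι → ℝ} {ν : κ → ℝ}
    (hμ : ∀ i, 0 ≤ μ i) (hν : ∀ k, 0 ≤ ν k) (M : Matrix ι κ ℝ) :
    (∃ C, ∀ v, weightedNorm μ (M *ᵥ v) ≤ C * weightedNorm ν v) ↔
      ∀ k, ν k = 0 → ∀ i, μ i * M i k = 0 := by
  constructor
  · rintro ⟨C, hC⟩ k hk
    have hsingle : weightedNorm ν (Pi.single k 1) = 0 :=
      (weightedNorm_eq_zero_iff hν).2 fun k' => by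
        rcases eq_or_ne k' k with rfl | h
        · simp [hk]
        · simp [h]
    have hcol : weightedNorm μ (M *ᵥ Pi.single k 1) = 0 :=
      le_antisymm (by simpa [hsingle] using hC (Pi.single k 1)) (Real.sqrt_nonneg _)
    simpa [mulVec_single_one] using (weightedNorm_eq_zero_iff hμ).1 hcol
  · intro hM
    set K : ι → ℝ := fun i => ∑ k, M i k ^ 2 / ν k
    have hK : ∀ i, 0 ≤ μ i * K i := fun i =>
      mul_nonneg (hμ i) (Finset.sum_nonneg fun k _ => div_nonneg (sq_nonneg _) (hν k))
    refine ⟨√(∑ i, μ i * K i), fun v => ?_⟩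
    have hrow : ∀ i, μ i * (M *ᵥ v) i ^ 2 ≤ μ i * K i * ∑ k, ν k * v k ^ 2 := by
      intro i
      rcases eq_or_ne (μ i) 0 with h | h
      · simp [h]
      · rw [mul_assoc]
        exact mul_le_mul_of_nonneg_left (sq_dotProduct_le_weighted hν
          (fun k hk => (mul_eq_zero.1 (hM k hk i)).resolve_left h) v) (hμ i)
    rw [weightedNorm, weightedNorm, ← Real.sqrt_mul (Finset.sum_nonneg fun i _ => hK i)]
    exact Real.sqrt_le_sqrt (by rw [Finset.sum_mul]; exact Finset.sum_le_sum fun i _ => hrow i)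

end WeightedNorm

section WeightedProj

variable {ι κ η : Type*} [Fintype ι] [DecidableEq ι]

lemma transpose_mul_diagonal_mul_apply (Φ : Matrix ι κ ℝ) (μ : ι → ℝ) (A : Matrix ι η ℝ)
    (j : κ) (t : η) : (Φᵀ * diagonal μ * A) j t = ∑ i, μ i * A i t * Φ i j := by
  rw [Matrix.mul_assoc, mul_apply]
  simp only [diagonal_mul, transpose_apply]
  exact Finset.sum_congr rfl fun i _ => by ring

variable [Fintype κ] [DecidableEq κ]

noncomputable def weightedProj (Φ : Matrix ι κ ℝ) (μ : ι → ℝ) : Matrix ι ι ℝ :=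
  Φ * (Φᵀ * diagonal μ * Φ)⁻¹ * Φᵀ * diagonal μ

lemma forall_mul_weightedProj_mul_apply_eq_zero_iff {Φ : Matrix ι κ ℝ} {μ : ι → ℝ}
    (hSig : IsUnit (Φᵀ * diagonal μ * Φ)) (P : Matrix ι η ℝ) (t : η) :
    (∀ i, μ i * (weightedProj Φ μ * P) i t = 0) ↔ ∀ j, (Φᵀ * diagonal μ * P) j t = 0 := by
  constructor
  · intro h j
    have hfix : Φᵀ * diagonal μ * (weightedProj Φ μ * P) = Φᵀ * diagonal μ * P := by
      simp only [weightedProj, ← Matrix.mul_assoc]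
      rw [mul_nonsing_inv _ ((isUnit_iff_isUnit_det _).mp hSig), Matrix.one_mul]
    rw [← hfix, transpose_mul_diagonal_mul_apply]
    simp [h]
  · intro h i
    have hfactor : weightedProj Φ μ * P =
        Φ * (Φᵀ * diagonal μ * Φ)⁻¹ * (Φᵀ * diagonal μ * P) := by
      simp only [weightedProj, Matrix.mul_assoc]
    rw [hfactor, mul_apply, Finset.sum_eq_zero fun j _ => by rw [h j, mul_zero], mul_zero]

end WeightedProj

theorem stmt16_general (S d : ℕ) (Φ : Matrix (Fin S) (Fin d) ℝ)
    (μ : Fin S → ℝ) (hμ0 : ∀ s, 0 ≤ μ s)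
    (P : Matrix (Fin S) (Fin S) ℝ)
    (hSig : IsUnit (Φᵀ * Matrix.diagonal μ * Φ)) :
    let D := Matrix.diagonal μ
    let Pr := Φ * (Φᵀ * D * Φ)⁻¹ * Φᵀ * D
    let nμ : (Fin S → ℝ) → ℝ := fun v => Real.sqrt (∑ s, μ s * (v s) ^ 2)
    (∃ C : ℝ, ∀ v : Fin S → ℝ, nμ ((Pr * P) *ᵥ v) ≤ C * nμ v) ↔
      (∀ s' : Fin S, μ s' = 0 → ∀ j : Fin d, ∑ s, μ s * P s s' * Φ s j = 0) := by
  intro D Pr nμ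
  show (∃ C : ℝ, ∀ v, weightedNorm μ ((weightedProj Φ μ * P) *ᵥ v) ≤ C * weightedNorm μ v) ↔ _
  rw [exists_weightedNorm_mulVec_le_iff hμ0 hμ0]
  refine forall₂_congr fun s' _ => ?_
  rw [forall_mul_weightedProj_mul_apply_eq_zero_iff hSig]
  simp only [transpose_mul_diagonal_mul_apply]

theorem stmt16 (S d : ℕ) (Φ : Matrix (Fin S) (Fin d) ℝ)
    (μ : Fin S → ℝ) (hμ0 : ∀ s, 0 ≤ μ s) (hμ1 : ∑ s, μ s = 1)
    (P : Matrix (Fin S) (Fin S) ℝ)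
    (hP0 : ∀ i j, 0 ≤ P i j) (hP1 : ∀ i, ∑ j, P i j = 1)
    (hSig : IsUnit (Φᵀ * Matrix.diagonal μ * Φ)) :
    let D := Matrix.diagonal μ
    let Pr := Φ * (Φᵀ * D * Φ)⁻¹ * Φᵀ * D
    let nμ : (Fin S → ℝ) → ℝ := fun v => Real.sqrt (∑ s, μ s * (v s) ^ 2)
    (∃ C : ℝ, ∀ v : Fin S → ℝ, nμ ((Pr * P) *ᵥ v) ≤ C * nμ v) ↔
      (∀ s' : Fin S, μ s' = 0 → ∀ j : Fin d, ∑ s, μ s * P s s' * Φ s j = 0) :=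
  stmt16_general S d Φ μ hμ0 P hSig
end

section
/- Let γ ∈ [0.7, 1), y ∈ [0, 1−γ], and α = (−γ + √(γ² + 4y))/(2(1−γ)). Then 0 ≤ α ≤ 1, α(1−γ)(α(1−γ) + γ) = y, and 1/(α(1−γ)) ≥ γ/y + 1/2 (interpreting the left side as +∞ when y = 0 and the inequality over extended reals, or restricting to y > 0). -/
/-!
Writing `t = α (1 - γ)`, the number `t` is the positive root of `t ^ 2 + γ t = y`, so `α` is
controlled by monotonicity of that root in `y`, and `t (t + γ) = y` gives the exact identity
`1 / t = γ / y + 1 / (t + γ)`. Since `y ≤ 1 - γ` forces `t + γ ≤ 1`, the last term is at least `1`,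
which is stronger than the `1 / 2` required.
-/

namespace Real

/-- The larger root of `t ^ 2 + b * t - c`. -/
noncomputable def quadRoot (b c : ℝ) : ℝ := (-b + √(b ^ 2 + 4 * c)) / 2

variable {b c : ℝ}

theorem quadRoot_mul_add_self (hc : 0 ≤ c) : quadRoot b c * (quadRoot b c + b) = c := by
  have hsq : √(b ^ 2 + 4 * c) ^ 2 = b ^ 2 + 4 * c := sq_sqrt (by positivity)
  unfold quadRoot
  linear_combination hsq / 4

theorem abs_lt_sqrt_sq_add (hc : 0 < c) : |b| < √(b ^ 2 + 4 * c) := by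
  rw [← sqrt_sq_eq_abs]
  exact sqrt_lt_sqrt (sq_nonneg b) (by linarith)

theorem quadRoot_pos (hc : 0 < c) : 0 < quadRoot b c := by
  have := (abs_lt_sqrt_sq_add (b := b) hc).trans_le' (le_abs_self b)
  unfold quadRoot
  linarith

theorem quadRoot_add_pos (hc : 0 < c) : 0 < quadRoot b c + b := by
  have := (abs_lt_sqrt_sq_add (b := b) hc).trans_le' (neg_le_abs b)
  unfold quadRoot
  linarith

theorem quadRoot_le {m : ℝ} (hm : 0 ≤ 2 * m + b) (hc : c ≤ m * (m + b)) : quadRoot b c ≤ m := by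
  have : √(b ^ 2 + 4 * c) ≤ 2 * m + b := sqrt_le_iff.2 ⟨hm, by nlinarith⟩
  unfold quadRoot
  linarith

end Real

theorem one_div_eq_div_add_one_div_of_mul_add_eq {t b c : ℝ} (ht : t ≠ 0) (htb : t + b ≠ 0)
    (h : t * (t + b) = c) : 1 / t = b / c + 1 / (t + b) := by
  subst h
  field_simp
  ring

theorem stmt19_general (γ y : ℝ) (hγ1 : γ < 1) (hy0 : 0 < y) (hy1 : y ≤ 1 - γ) :
    let α := (-γ + Real.sqrt (γ ^ 2 + 4 * y)) / (2 * (1 - γ))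
    0 ≤ α ∧ α ≤ 1 ∧ α * (1 - γ) * (α * (1 - γ) + γ) = y ∧
      1 / (α * (1 - γ)) ≥ γ / y + 1 / 2 := by
  intro α
  have hγ : 0 < 1 - γ := by linarith
  have hα : α = Real.quadRoot γ y / (1 - γ) := by
    simp only [α, Real.quadRoot]
    field_simp
  have hαt : α * (1 - γ) = Real.quadRoot γ y := by
    rw [hα, div_mul_cancel₀ _ hγ.ne']
  have ht := Real.quadRoot_pos (b := γ) hy0
  have htγ := Real.quadRoot_add_pos (b := γ) hy0
  have hty := Real.quadRoot_mul_add_self (b := γ) hy0.le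
  have ht_le : Real.quadRoot γ y ≤ 1 - γ := Real.quadRoot_le (by linarith) (by linarith)
  refine ⟨hα ▸ div_nonneg ht.le hγ.le, hα ▸ (div_le_one hγ).2 ht_le, hαt ▸ hty, ?_⟩
  rw [hαt, one_div_eq_div_add_one_div_of_mul_add_eq ht.ne' htγ.ne' hty, ge_iff_le]
  gcongr
  linarith

theorem stmt19 (γ y : ℝ) (hγ0 : 0.7 ≤ γ) (hγ1 : γ < 1) (hy0 : 0 < y) (hy1 : y ≤ 1 - γ) :
    let α := (-γ + Real.sqrt (γ ^ 2 + 4 * y)) / (2 * (1 - γ))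
    0 ≤ α ∧ α ≤ 1 ∧ α * (1 - γ) * (α * (1 - γ) + γ) = y ∧
      1 / (α * (1 - γ)) ≥ γ / y + 1 / 2 :=
  stmt19_general γ y hγ1 hy0 hy1
end
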